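/- arXiv:cs/0602077 — 2 statements merged into one kernel-verified Lean document; each statement's English description precedes it below -/
import Mathlib

section
/- If V is a locally distributive quantaloid, then V-categories A and B are bisimilar if and only if there exists a span A ← X → B of surjective functional bisimulations. -/
/-- A quantaloid: a (small) locally ordered bicategory whose hom-posets are
complete lattices and whose composition preserves suprema in each variable. -/
structure Quantaloid where
  Obj : Type
  Hom : Obj → Obj → Type
  [lat : ∀ u v : Obj, CompleteLattice (Hom u v)]
  comp : ∀ {u v w : Obj}, Hom u v → Hom v w → Hom u w
  id : ∀ u : Obj, Hom u u
  comp_assoc : ∀ {u v w x : Obj} (f : Hom u v) (g : Hom v w) (h : Hom w x),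
    comp (comp f g) h = comp f (comp g h)
  id_comp : ∀ {u v : Obj} (f : Hom u v), comp (id u) f = f
  comp_id : ∀ {u v : Obj} (f : Hom u v), comp f (id v) = f
  comp_sSup_left : ∀ {u v w : Obj} (S : Set (Hom u v)) (g : Hom v w),
    comp (sSup S) g = sSup ((fun f => comp f g) '' S)
  comp_sSup_right : ∀ {u v w : Obj} (f : Hom u v) (S : Set (Hom v w)),
    comp f (sSup S) = sSup ((fun g => comp f g) '' S)

attribute [instance] Quantaloid.lat

/-- Transport of homs along equalities of objects. -/
def Quantaloid.cast (V : Quantaloid) {u u' v v' : V.Obj} (hu : u = u') (hv : v = v')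
    (f : V.Hom u v) : V.Hom u' v' := hu ▸ hv ▸ f

/-- A `V`-category. -/
structure VCat (V : Quantaloid) where
  Obj : Type
  pt : Obj → V.Obj
  hom : ∀ a b : Obj, V.Hom (pt a) (pt b)
  id_le : ∀ a, V.id (pt a) ≤ hom a a
  comp_le : ∀ a b c, V.comp (hom a b) (hom b c) ≤ hom a c

/-- A simulation from `A` to `B`. -/
def IsSimulation (V : Quantaloid) (A B : VCat V) (R : A.Obj → B.Obj → Prop) : Prop :=
  (∀ a b, R a b → A.pt a = B.pt b) ∧
  ∀ (a : A.Obj) (b : B.Obj), R a b → ∀ (a' : A.Obj) (h : A.pt a = B.pt b),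
    V.cast h rfl (A.hom a a') ≤
      sSup {x : V.Hom (B.pt b) (A.pt a') |
        ∃ (b' : B.Obj) (h' : A.pt a' = B.pt b'), R a' b' ∧ x = V.cast rfl h'.symm (B.hom b b')}

/-- A bisimulation from `A` to `B`. -/
def IsBisimulation (V : Quantaloid) (A B : VCat V) (R : A.Obj → B.Obj → Prop) : Prop :=
  IsSimulation V A B R ∧ IsSimulation V B A (fun b a => R a b)

/-- Bisimilarity of `V`-categories. -/
def Bisimilar (V : Quantaloid) (A B : VCat V) : Prop :=
  ∃ R, IsBisimulation V A B R ∧ (∀ a, ∃ b, R a b) ∧ (∀ b, ∃ a, R a b)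

/-- A `V`-functor. -/
structure VFunctor (V : Quantaloid) (A B : VCat V) where
  toFun : A.Obj → B.Obj
  pt_eq : ∀ a, B.pt (toFun a) = A.pt a
  map_le : ∀ a a',
    V.cast (pt_eq a).symm (pt_eq a').symm (A.hom a a') ≤ B.hom (toFun a) (toFun a')

/-- A surjective functional bisimulation (an "open" map). -/
def VFunctor.IsSFB {V : Quantaloid} {A B : VCat V} (f : VFunctor V A B) : Prop :=
  Function.Surjective f.toFun ∧
  ∀ (a : A.Obj) (b : B.Obj),
    B.hom (f.toFun a) b =
      sSup {x : V.Hom (B.pt (f.toFun a)) (B.pt b) |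
        ∃ (a' : A.Obj) (h : f.toFun a' = b),
          x = V.cast (f.pt_eq a).symm ((f.pt_eq a').symm.trans (congrArg B.pt h)) (A.hom a a')}

/-! From a bisimulation `R` with surjective projections, take for `X` the graph of `R`, with
`X((a,b),(a',b')) = A(a,a') ⊓ B(b,b')`. The simulation condition covers `A(a,a')` by the
`B(b,b')` with `R a' b'`; meeting this cover with `A(a,a')` and distributing the meet over the
join exhibits `A(a,a')` as the join of the `X((a,b),(a',b'))` over the
fibre of `a'`, i.e. the first projection is a functional bisimulation, and symmetrically for
the second. Conversely, for a span `A ←p X →q B` of surjective functional bisimulations, the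
relation `{(p x, q x)}` is a bisimulation: `A(p x, a')` is the join of the `X(x,x')` over
`p x' = a'`, and each of these lies below `B(q x, q x')`. -/

namespace Quantaloid

variable (V : Quantaloid) {u u' u'' v v' v'' w w' : V.Obj}

@[simp]
theorem cast_self (hu : u = u) (hv : v = v) (f : V.Hom u v) : V.cast hu hv f = f := rfl

@[simp]
theorem cast_cast (hu : u = u') (hu' : u' = u'') (hv : v = v') (hv' : v' = v'')
    (f : V.Hom u v) : V.cast hu' hv' (V.cast hu hv f) = V.cast (hu.trans hu') (hv.trans hv') f := by
  subst hu hu' hv hv'; rfl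

theorem cast_mono (hu : u = u') (hv : v = v') : Monotone (V.cast hu hv) := by
  subst hu hv; exact monotone_id

theorem cast_inf (hu : u = u') (hv : v = v') (f g : V.Hom u v) :
    V.cast hu hv (f ⊓ g) = V.cast hu hv f ⊓ V.cast hu hv g := by
  subst hu hv; rfl

theorem cast_sSup (hu : u = u') (hv : v = v') (S : Set (V.Hom u v)) :
    V.cast hu hv (sSup S) = sSup (V.cast hu hv '' S) := by
  subst hu hv; exact congrArg sSup (Set.image_id' S).symm

theorem cast_id (hu : u = u') : V.cast hu hu (V.id u) = V.id u' := by
  subst hu; rfl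

theorem comp_cast (hu : u = u') (hv : v = v') (hw : w = w') (f : V.Hom u v) (g : V.Hom v w) :
    V.comp (V.cast hu hv f) (V.cast hv hw g) = V.cast hu hw (V.comp f g) := by
  subst hu hv hw; rfl

theorem comp_mono {f f' : V.Hom u v} {g g' : V.Hom v w} (hf : f ≤ f') (hg : g ≤ g') :
    V.comp f g ≤ V.comp f' g' := by
  have hleft := V.comp_sSup_left {f, f'} g
  have hright := V.comp_sSup_right f' {g, g'}
  rw [Set.image_pair, sSup_pair, sSup_pair, sup_eq_right.2 hf] at hleft
  rw [Set.image_pair, sSup_pair, sSup_pair, sup_eq_right.2 hg] at hright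
  exact (hleft ▸ le_sup_left).trans (hright ▸ le_sup_left)

def IsLocallyDistributive : Prop :=
  ∀ (u v : V.Obj) (x : V.Hom u v) (S : Set (V.Hom u v)), x ⊓ sSup S = ⨆ y ∈ S, x ⊓ y

variable {V}

theorem IsLocallyDistributive.le_of_le_sSup (hV : V.IsLocallyDistributive) {x c : V.Hom u v}
    {S : Set (V.Hom u v)} (hx : x ≤ sSup S) (hS : ∀ s ∈ S, x ⊓ s ≤ c) : x ≤ c :=
  calc x = x ⊓ sSup S := (inf_eq_left.2 hx).symm
    _ = ⨆ s ∈ S, x ⊓ s := hV _ _ x S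
    _ ≤ c := iSup₂_le hS

end Quantaloid

section

variable {V : Quantaloid} {A B X : VCat V}

namespace VFunctor

def fiberHoms (f : VFunctor V X A) (x : X.Obj) (a : A.Obj) :
    Set (V.Hom (A.pt (f.toFun x)) (A.pt a)) :=
  {y | ∃ (x' : X.Obj) (h : f.toFun x' = a),
    y = V.cast (f.pt_eq x).symm ((f.pt_eq x').symm.trans (congrArg A.pt h)) (X.hom x x')}

def IsFunctionalBisimulation (f : VFunctor V X A) : Prop :=
  ∀ x a, A.hom (f.toFun x) a = sSup (f.fiberHoms x a)

theorem isFunctionalBisimulation_of_le (f : VFunctor V X A)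
    (h : ∀ x a, A.hom (f.toFun x) a ≤ sSup (f.fiberHoms x a)) : f.IsFunctionalBisimulation :=
  fun x a => (h x a).antisymm <| sSup_le <| by
    rintro _ ⟨x', rfl, rfl⟩
    exact f.map_le x x'

end VFunctor

def spanRel (p : VFunctor V X A) (q : VFunctor V X B) (a : A.Obj) (b : B.Obj) : Prop :=
  ∃ x, p.toFun x = a ∧ q.toFun x = b

theorem spanRel_flip (p : VFunctor V X A) (q : VFunctor V X B) :
    (fun b a => spanRel p q a b) = spanRel q p := by
  funext b a
  simp only [spanRel, and_comm]

theorem spanRel_pt_eq (p : VFunctor V X A) (q : VFunctor V X B) :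
    ∀ a b, spanRel p q a b → A.pt a = B.pt b := by
  rintro _ _ ⟨x, rfl, rfl⟩
  exact (p.pt_eq x).trans (q.pt_eq x).symm

theorem isSimulation_spanRel {p : VFunctor V X A} (hp : p.IsFunctionalBisimulation)
    (q : VFunctor V X B) : IsSimulation V A B (spanRel p q) := by
  refine ⟨spanRel_pt_eq p q, ?_⟩
  rintro _ _ ⟨x, rfl, rfl⟩ a' h
  rw [hp x a', V.cast_sSup]
  refine sSup_le ?_
  rintro _ ⟨_, ⟨x', rfl, rfl⟩, rfl⟩
  have h' : A.pt (p.toFun x') = B.pt (q.toFun x') := spanRel_pt_eq p q _ _ ⟨x', rfl, rfl⟩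
  refine le_trans ?_ (le_sSup ⟨q.toFun x', h', ⟨x', rfl, rfl⟩, rfl⟩)
  simpa only [V.cast_cast] using V.cast_mono rfl h'.symm (q.map_le x x')

theorem isBisimulation_spanRel {p : VFunctor V X A} {q : VFunctor V X B}
    (hp : p.IsFunctionalBisimulation) (hq : q.IsFunctionalBisimulation) :
    IsBisimulation V A B (spanRel p q) :=
  ⟨isSimulation_spanRel hp q, spanRel_flip p q ▸ isSimulation_spanRel hq p⟩

def VFunctor.JointlyReflectHoms (f : VFunctor V X A) (g : VFunctor V X B) : Prop :=
  ∀ x x', V.cast (f.pt_eq x) (f.pt_eq x') (A.hom (f.toFun x) (f.toFun x')) ⊓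
    V.cast (g.pt_eq x) (g.pt_eq x') (B.hom (g.toFun x) (g.toFun x')) ≤ X.hom x x'

theorem VFunctor.JointlyReflectHoms.symm {f : VFunctor V X A} {g : VFunctor V X B}
    (hfg : f.JointlyReflectHoms g) : g.JointlyReflectHoms f :=
  fun x x' => inf_comm _ _ |>.trans_le (hfg x x')

theorem VFunctor.isFunctionalBisimulation_of_isSimulation (hV : V.IsLocallyDistributive)
    {f : VFunctor V X A} {g : VFunctor V X B} (hfg : f.JointlyReflectHoms g)
    (hsim : IsSimulation V A B (spanRel f g)) : f.IsFunctionalBisimulation := by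
  refine f.isFunctionalBisimulation_of_le fun x a' => ?_
  have hx : A.pt (f.toFun x) = B.pt (g.toFun x) := spanRel_pt_eq f g _ _ ⟨x, rfl, rfl⟩
  have hcover := V.cast_mono hx.symm rfl (hsim.2 _ _ ⟨x, rfl, rfl⟩ a' hx)
  rw [V.cast_cast, V.cast_self, V.cast_sSup] at hcover
  refine hV.le_of_le_sSup hcover ?_
  rintro _ ⟨_, ⟨_, _, ⟨x', rfl, rfl⟩, rfl⟩, rfl⟩
  refine le_trans ?_ (le_sSup ⟨x', rfl, rfl⟩)
  simpa only [V.cast_inf, V.cast_cast, V.cast_self] using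
    V.cast_mono (f.pt_eq x).symm (f.pt_eq x').symm (hfg x x')

def graphCat (R : A.Obj → B.Obj → Prop) (hpt : ∀ a b, R a b → A.pt a = B.pt b) :
    VCat V where
  Obj := {ab : A.Obj × B.Obj // R ab.1 ab.2}
  pt x := A.pt x.1.1
  hom x y := A.hom x.1.1 y.1.1 ⊓ V.cast (hpt _ _ x.2).symm (hpt _ _ y.2).symm (B.hom x.1.2 y.1.2)
  id_le x := le_inf (A.id_le _) <| by
    simpa only [V.cast_id] using V.cast_mono (hpt _ _ x.2).symm (hpt _ _ x.2).symm (B.id_le x.1.2)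
  comp_le x y z := le_inf ((V.comp_mono inf_le_left inf_le_left).trans (A.comp_le _ _ _)) <|
    (V.comp_mono inf_le_right inf_le_right).trans <|
      (V.comp_cast _ _ _ _ _).le.trans (V.cast_mono _ _ (B.comp_le _ _ _))

namespace graphCat

variable (R : A.Obj → B.Obj → Prop) (hpt : ∀ a b, R a b → A.pt a = B.pt b)

def fst : VFunctor V (graphCat R hpt) A where
  toFun x := x.1.1
  pt_eq _ := rfl
  map_le _ _ := inf_le_left

def snd : VFunctor V (graphCat R hpt) B where
  toFun x := x.1.2
  pt_eq x := (hpt _ _ x.2).symm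
  map_le _ _ := (V.cast_mono _ _ inf_le_right).trans (V.cast_cast _ _ _ _ _).le

theorem spanRel_fst_snd : spanRel (fst R hpt) (snd R hpt) = R := by
  funext a b
  refine propext ⟨?_, fun h => ⟨⟨(a, b), h⟩, rfl, rfl⟩⟩
  rintro ⟨x, rfl, rfl⟩
  exact x.2

theorem fst_jointlyReflectHoms_snd : (fst R hpt).JointlyReflectHoms (snd R hpt) :=
  fun _ _ => le_rfl

theorem fst_surjective (hR : ∀ a, ∃ b, R a b) : Function.Surjective (fst R hpt).toFun :=
  fun a => (hR a).elim fun b h => ⟨⟨(a, b), h⟩, rfl⟩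

theorem snd_surjective (hR : ∀ b, ∃ a, R a b) : Function.Surjective (snd R hpt).toFun :=
  fun b => (hR b).elim fun a h => ⟨⟨(a, b), h⟩, rfl⟩

end graphCat

end

/-- if `V` is locally distributive then `A` and `B` are bisimilar
iff there is a span `A ← X → B` of surjective functional bisimulations. -/
theorem bisimilar_iff_span (V : Quantaloid)
    (hdist : ∀ (u v : V.Obj) (x : V.Hom u v) (S : Set (V.Hom u v)),
      x ⊓ sSup S = ⨆ y ∈ S, x ⊓ y)
    (A B : VCat V) :
    Bisimilar V A B ↔
      ∃ (X : VCat V) (p : VFunctor V X A) (q : VFunctor V X B),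
        p.IsSFB ∧ q.IsSFB := by
  constructor
  · rintro ⟨R, hR, hR_fst, hR_snd⟩
    have hpt := hR.1.1
    have hsim_fst : IsSimulation V A B (spanRel (graphCat.fst R hpt) (graphCat.snd R hpt)) := by
      rw [graphCat.spanRel_fst_snd]; exact hR.1
    have hsim_snd : IsSimulation V B A (spanRel (graphCat.snd R hpt) (graphCat.fst R hpt)) := by
      rw [← spanRel_flip, graphCat.spanRel_fst_snd]; exact hR.2
    have hjoint := graphCat.fst_jointlyReflectHoms_snd R hpt
    exact ⟨graphCat R hpt, graphCat.fst R hpt, graphCat.snd R hpt,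
      ⟨graphCat.fst_surjective R hpt hR_fst,
        VFunctor.isFunctionalBisimulation_of_isSimulation hdist hjoint hsim_fst⟩,
      ⟨graphCat.snd_surjective R hpt hR_snd,
        VFunctor.isFunctionalBisimulation_of_isSimulation hdist hjoint.symm hsim_snd⟩⟩
  · rintro ⟨X, p, q, ⟨hp_surj, hp⟩, ⟨hq_surj, hq⟩⟩
    refine ⟨spanRel p q, isBisimulation_spanRel hp hq, fun a => ?_, fun b => ?_⟩
    · obtain ⟨x, rfl⟩ := hp_surj a
      exact ⟨q.toFun x, x, rfl, rfl⟩
    · obtain ⟨x, rfl⟩ := hq_surj b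
      exact ⟨p.toFun x, x, rfl, rfl⟩
end

section
/- (Quotient axiom) Given V-functors p : A → B, f : B → C, g : A → C with f ∘ p = g, if g is a surjective functional bisimulation and p is surjective on objects, then f is a surjective functional bisimulation. -/
lemma Quantaloid.cast_cast_s14 (V : Quantaloid) {u u' u'' v v' v'' : V.Obj}
    (h1 : u = u') (h2 : v = v') (h3 : u' = u'') (h4 : v' = v'')
    (f : V.Hom u v) :
    V.cast h3 h4 (V.cast h1 h2 f) = V.cast (h1.trans h3) (h2.trans h4) f := by
  subst h1; subst h2; subst h3; subst h4; rfl

lemma Quantaloid.cast_mono_s14 (V : Quantaloid) {u u' v v' : V.Obj}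
    (h1 : u = u') (h2 : v = v') {f g : V.Hom u v} (hfg : f ≤ g) :
    V.cast h1 h2 f ≤ V.cast h1 h2 g := by
  subst h1; subst h2; exact hfg

lemma Quantaloid.cast_sSup_s14 (V : Quantaloid) {u u' v v' : V.Obj}
    (h1 : u = u') (h2 : v = v') (S : Set (V.Hom u v)) :
    V.cast h1 h2 (sSup S) = sSup (V.cast h1 h2 '' S) := by
  subst h1; subst h2
  show sSup S = sSup ((fun x => x) '' S)
  simp

lemma VCat.hom_cast {V : Quantaloid} (C : VCat V) {x y : C.Obj} (h : x = y) (z : C.Obj) :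
    C.hom x z = V.cast (congrArg C.pt h).symm rfl (C.hom y z) := by
  subst h; rfl

/-- quotient axiom: if `f ∘ p = g`, `g` is a surjective
functional bisimulation and `p` is surjective on objects, then `f` is a
surjective functional bisimulation. -/
theorem quotient_axiom (V : Quantaloid) (A B C : VCat V)
    (p : VFunctor V A B) (f : VFunctor V B C) (g : VFunctor V A C)
    (hcomm : ∀ a, f.toFun (p.toFun a) = g.toFun a)
    (hg : g.IsSFB) (hp : Function.Surjective p.toFun) :
    f.IsSFB := by

  constructor
  · intro c
    obtain ⟨a, ha⟩ := hg.1 c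
    exact ⟨p.toFun a, (hcomm a).trans ha⟩
  · intro b c
    obtain ⟨a, rfl⟩ := hp b
    apply le_antisymm
    · rw [C.hom_cast (hcomm a) c, hg.2 a c, V.cast_sSup_s14]
      apply sSup_le
      rintro y ⟨x, ⟨a', h, rfl⟩, rfl⟩
      subst h
      refine le_trans ?_ (le_sSup ⟨p.toFun a', hcomm a', rfl⟩)
      rw [V.cast_cast_s14]
      have := V.cast_mono_s14 (f.pt_eq (p.toFun a)).symm
        ((f.pt_eq (p.toFun a')).symm.trans (congrArg C.pt (hcomm a'))) (p.map_le a a')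
      rw [V.cast_cast_s14] at this
      exact this
    · apply sSup_le
      rintro x ⟨b', h, rfl⟩
      subst h
      exact f.map_le (p.toFun a) b'
end
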